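/- arXiv:2603.00664 — 5 statements merged into one kernel-verified Lean document; each statement's English description precedes it below -/
import Mathlib

section
/- A hypergraph H admits a transversal coalition partition if and only if there is no edge e of H with e ≠ V(H) such that e is a subset of every edge of H. -/
open Finset

/-- A set `T` is a transversal of the hypergraph with edge family `E`
if it meets every edge. -/
def IsTransversal {α : Type*} [DecidableEq α] (E : Set (Finset α)) (T : Finset α) : Prop :=
  ∀ e ∈ E, (T ∩ e).Nonempty

/-- A transversal coalition partition of the vertex set `U` of a hypergraph with
edge family `E`: a partition of `U` into nonempty parts, each of which is either a
singleton transversal, or a non-transversal part forming a transversal coalition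
with another (non-transversal) part. -/
def IsTrcPartition {α : Type*} [DecidableEq α] (U : Finset α) (E : Set (Finset α))
    (P : Finset (Finset α)) : Prop :=
  (∀ p ∈ P, p.Nonempty) ∧
  (∀ p ∈ P, ∀ q ∈ P, p ≠ q → Disjoint p q) ∧
  P.biUnion id = U ∧
  ∀ p ∈ P, (∃ v, p = {v} ∧ IsTransversal E p) ∨
    (¬ IsTransversal E p ∧
      ∃ q ∈ P, q ≠ p ∧ ¬ IsTransversal E q ∧ IsTransversal E (p ∪ q))

/-- `TrcNumberIs U E k` says that the transversal coalition number of the hypergraph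
`(U, E)` equals `k`, i.e. `k` is the maximum number of parts of a transversal
coalition partition. -/
def TrcNumberIs {α : Type*} [DecidableEq α] (U : Finset α) (E : Set (Finset α)) (k : ℕ) : Prop :=
  IsGreatest {m | ∃ P : Finset (Finset α), IsTrcPartition U E P ∧ P.card = m} k

/-!
If an edge `e` lies in every edge, a set is a transversal exactly when it meets `e`, so two
non-transversal sets never form a coalition; every part of a transversal coalition partition is
then a singleton meeting `e`, which forces `e = U`.

Conversely, if every vertex lies in every edge, the partition into singletons works. Otherwise
take a maximal non-transversal set `A ⊆ U` containing a vertex that misses some edge, and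
partition `U` into `A` and singletons. By maximality `A ∪ {v}` is a transversal for every
`v ∉ A`, so each non-transversal singleton forms a coalition with `A`. The edge `e` missed by `A`
is not contained in every edge (else `e = U` would meet `A`), so some `w ∈ e` misses an edge, and
`{w}` is a partner for `A`.
-/

section

variable {α : Type*} [DecidableEq α] {U A T e : Finset α} {E : Set (Finset α)}

theorem isTransversal_singleton_iff {v : α} : IsTransversal E {v} ↔ ∀ e ∈ E, v ∈ e := by
  simp only [IsTransversal, ← not_disjoint_iff_nonempty_inter, disjoint_singleton_left, not_not]

theorem not_isTransversal_iff : ¬ IsTransversal E T ↔ ∃ e ∈ E, Disjoint T e := by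
  simp only [IsTransversal, ← not_disjoint_iff_nonempty_inter, not_forall, not_not, exists_prop]

theorem isTransversal_iff_of_forall_subset (he : e ∈ E) (hmin : ∀ e' ∈ E, e ⊆ e') :
    IsTransversal E T ↔ (T ∩ e).Nonempty :=
  ⟨fun hT ↦ hT e he, fun ⟨v, hv⟩ e' he' ↦
    ⟨v, mem_inter.2 ⟨(mem_inter.1 hv).1, hmin e' he' (mem_inter.1 hv).2⟩⟩⟩

theorem IsTrcPartition.subset_of_forall_subset {P : Finset (Finset α)}
    (hP : IsTrcPartition U E P) (he : e ∈ E) (hmin : ∀ e' ∈ E, e ⊆ e') : U ⊆ e := by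
  intro v hv
  rw [← hP.2.2.1, mem_biUnion] at hv
  obtain ⟨p, hp, hvp⟩ := hv
  rcases hP.2.2.2 p hp with ⟨w, rfl, hw⟩ | ⟨hpT, q, -, -, hqT, hpqT⟩
  · rw [mem_singleton.1 hvp]
    exact isTransversal_singleton_iff.1 hw e he
  · simp only [isTransversal_iff_of_forall_subset he hmin, union_inter_distrib_right,
      union_nonempty] at hpT hqT hpqT
    exact (hpqT.elim hpT hqT).elim

theorem Finpartition.isTrcPartition_iff (P : Finpartition U) :
    IsTrcPartition U E P.parts ↔ ∀ p ∈ P.parts, (∃ v, p = {v} ∧ IsTransversal E p) ∨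
      (¬ IsTransversal E p ∧
        ∃ q ∈ P.parts, q ≠ p ∧ ¬ IsTransversal E q ∧ IsTransversal E (p ∪ q)) :=
  ⟨fun h ↦ h.2.2.2, fun h ↦ ⟨fun _ ↦ P.nonempty_of_mem_parts, fun _ hp _ hq ↦ P.disjoint hp hq,
    by rw [← sup_eq_biUnion, P.sup_parts], h⟩⟩

theorem isTrcPartition_bot (hU : ∀ v ∈ U, ∀ e ∈ E, v ∈ e) :
    IsTrcPartition U E (⊥ : Finpartition U).parts := by
  refine (Finpartition.isTrcPartition_iff _).2 fun p hp ↦ ?_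
  obtain ⟨v, hv, rfl⟩ := Finpartition.mem_bot_iff.1 hp
  exact Or.inl ⟨v, rfl, isTransversal_singleton_iff.2 (hU v hv)⟩

theorem exists_isTrcPartition_of_maximal (hAU : A ⊆ U) (hA : A.Nonempty)
    (hAT : ¬ IsTransversal E A) (hmax : ∀ v ∈ U \ A, IsTransversal E (insert v A))
    {w : α} (hw : w ∈ U \ A) (hwT : ¬ IsTransversal E {w}) :
    ∃ P : Finset (Finset α), IsTrcPartition U E P := by
  let P : Finpartition U :=
    (⊥ : Finpartition (U \ A)).extend hA.ne_empty sdiff_disjoint (sdiff_union_of_subset hAU)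
  refine ⟨P.parts, (Finpartition.isTrcPartition_iff P).2 fun p hp ↦ ?_⟩
  have hsingleton_ne {v : α} (hv : v ∈ U \ A) : {v} ≠ A :=
    fun h ↦ (mem_sdiff.1 hv).2 (h ▸ mem_singleton_self v)
  have hsingleton_mem {v : α} (hv : v ∈ U \ A) : {v} ∈ P.parts :=
    mem_insert_of_mem (Finpartition.mem_bot_iff.2 ⟨v, hv, rfl⟩)
  rcases mem_insert.1 hp with rfl | hp
  · exact Or.inr ⟨hAT, {w}, hsingleton_mem hw, hsingleton_ne hw, hwT,
      by rw [union_comm, ← insert_eq]; exact hmax w hw⟩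
  obtain ⟨v, hv, rfl⟩ := Finpartition.mem_bot_iff.1 hp
  by_cases hvT : IsTransversal E {v}
  · exact Or.inl ⟨v, rfl, hvT⟩
  · exact Or.inr ⟨hvT, A, mem_insert_self A _, (hsingleton_ne hv).symm, hAT,
      by rw [← insert_eq]; exact hmax v hv⟩

theorem exists_isTrcPartition (hE : ∀ e ∈ E, e ⊆ U)
    (h : ∀ e ∈ E, e ≠ U → ∃ e' ∈ E, ¬ e ⊆ e') :
    ∃ P : Finset (Finset α), IsTrcPartition U E P := by
  classical
  by_cases hU : ∀ v ∈ U, ∀ e ∈ E, v ∈ e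
  · exact ⟨_, isTrcPartition_bot hU⟩
  push Not at hU
  obtain ⟨r, hrU, e₀, he₀, hre₀⟩ := hU
  have hrT : ¬ IsTransversal E {r} := fun hT ↦ hre₀ (isTransversal_singleton_iff.1 hT e₀ he₀)
  obtain ⟨A, hrA, ⟨hA, hAmax⟩⟩ :=
    (U.powerset.filter (¬ IsTransversal E ·)).exists_le_maximal (a := {r}) (by simp [hrU, hrT])
  rw [mem_filter, mem_powerset] at hA
  obtain ⟨hAU, hAT⟩ := hA
  rw [singleton_subset_iff] at hrA
  have hmax : ∀ v ∈ U \ A, IsTransversal E (insert v A) := by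
    intro v hv
    by_contra hvT
    have hle := hAmax (mem_filter.2 ⟨mem_powerset.2 (insert_subset (mem_sdiff.1 hv).1 hAU), hvT⟩)
      (subset_insert v A)
    exact (mem_sdiff.1 hv).2 (hle (mem_insert_self v A))
  obtain ⟨e, he, hAe⟩ := not_isTransversal_iff.1 hAT
  obtain ⟨w, hwe, hwT⟩ : ∃ w ∈ e, ¬ IsTransversal E {w} := by
    by_contra! hall
    have heU : e = U := by
      by_contra hne
      obtain ⟨e', he', hee'⟩ := h e he hne
      exact hee' fun w hw ↦ isTransversal_singleton_iff.1 (hall w hw) e' he'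
    exact disjoint_left.1 hAe hrA (heU ▸ hAU hrA)
  exact exists_isTrcPartition_of_maximal hAU ⟨r, hrA⟩ hAT hmax
    (mem_sdiff.2 ⟨hE e he hwe, disjoint_right.1 hAe hwe⟩) hwT

end

theorem stmt0 {α : Type*} [DecidableEq α] (U : Finset α) (E : Set (Finset α))
    (hE : ∀ e ∈ E, e.Nonempty ∧ e ⊆ U) :
    (∃ P : Finset (Finset α), IsTrcPartition U E P) ↔
      ¬ ∃ e ∈ E, e ≠ U ∧ ∀ e' ∈ E, e ⊆ e' := by
  constructor
  · rintro ⟨P, hP⟩ ⟨e, he, heU, hmin⟩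
    exact heU ((hE e he).2.antisymm (hP.subset_of_forall_subset he hmin))
  · intro h
    push Not at h
    exact exists_isTrcPartition (fun e he ↦ (hE e he).2) h
end

section
/- For the complete r-uniform hypergraph K_n^r with r ≥ 3 and n > r + 1, the transversal coalition number is C_τ(K_n^r) = r + 1. -/
open Finset

/-!
In `K_U^r` a set `T` is a transversal iff fewer than `r` vertices lie outside it. For `r < |U|`
no single vertex is a transversal, so every part of a transversal coalition partition has a
partner `q` with `|U \ (p ∪ q)| ≤ r - 1`; the remaining parts are disjoint nonempty subsets of
`U \ (p ∪ q)`, which bounds the number of parts by `r + 1`. Conversely, for an `r`-set `S ⊆ U`,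
the singletons of `S` together with `U \ S` form such a partition with `r + 1` parts: each
singleton forms a coalition with `U \ S`.
-/

section TrcPartition

variable {α : Type*} [DecidableEq α] {U : Finset α} {E : Set (Finset α)}

theorem IsTrcPartition.card_le_card_sdiff_union_add_two {P : Finset (Finset α)}
    (hP : IsTrcPartition U E P) {p q : Finset α} (hp : p ∈ P) (hq : q ∈ P) (hpq : p ≠ q) :
    P.card ≤ (U \ (p ∪ q)).card + 2 := by
  obtain ⟨hne, hdisj, hcover, -⟩ := hP
  set R := P \ {p, q}
  have hpqP : {p, q} ⊆ P := insert_subset hp (singleton_subset_iff.2 hq)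
  have hR : R ⊆ P := sdiff_subset
  have hcard : R.card + 2 = P.card := by
    rw [← card_pair hpq, card_sdiff_add_card_eq_card hpqP]
  have hRcover : R.biUnion id ⊆ U \ (p ∪ q) := by
    intro x hx
    obtain ⟨s, hs, hxs⟩ := mem_biUnion.1 hx
    obtain ⟨hsP, hspq⟩ := mem_sdiff.1 hs
    simp only [mem_insert, mem_singleton, not_or] at hspq
    refine mem_sdiff.2 ⟨hcover ▸ mem_biUnion.2 ⟨s, hsP, hxs⟩, ?_⟩
    rw [mem_union, not_or]
    exact ⟨disjoint_left.1 (hdisj s hsP p hp hspq.1) hxs,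
      disjoint_left.1 (hdisj s hsP q hq hspq.2) hxs⟩
  have hRle : R.card ≤ (R.biUnion id).card :=
    card_le_card_biUnion (fun s hs t ht hst => hdisj s (hR hs) t (hR ht) hst)
      (fun s hs => hne s (hR hs))
  have := card_le_card hRcover
  omega

theorem Finpartition.isTrcPartition (Q : Finpartition U)
    (hQ : ∀ p ∈ Q.parts, (∃ v, p = {v} ∧ IsTransversal E p) ∨
      (¬ IsTransversal E p ∧
        ∃ q ∈ Q.parts, q ≠ p ∧ ¬ IsTransversal E q ∧ IsTransversal E (p ∪ q))) :
    IsTrcPartition U E Q.parts :=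
  ⟨fun _ => Q.nonempty_of_mem_parts, fun _ hp _ hq hpq => Q.disjoint hp hq hpq,
    Q.biUnion_parts, hQ⟩

end TrcPartition

section CompleteHypergraph

variable {α : Type*} [DecidableEq α] {U : Finset α} {r : ℕ}

theorem isTransversal_complete_iff {T : Finset α} :
    IsTransversal {e | e ⊆ U ∧ e.card = r} T ↔ (U \ T).card < r := by
  constructor
  · intro hT
    by_contra! hle
    obtain ⟨e, heT, he⟩ := exists_subset_card_eq hle
    have hdisj : Disjoint e T := (subset_sdiff.1 heT).2
    exact not_disjoint_iff_nonempty_inter.2 (hT e ⟨heT.trans sdiff_subset, he⟩) hdisj.symm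
  · rintro hT e ⟨heU, he⟩
    rw [← not_disjoint_iff_nonempty_inter]
    intro hdisj
    have := card_le_card (subset_sdiff.2 ⟨heU, hdisj.symm⟩)
    omega

theorem not_isTransversal_complete_singleton (hr : r < U.card) (v : α) :
    ¬ IsTransversal {e | e ⊆ U ∧ e.card = r} {v} := by
  rw [isTransversal_complete_iff, not_lt]
  have := le_card_sdiff {v} U
  rw [card_singleton] at this
  omega

theorem IsTrcPartition.card_le_of_complete (hr : r < U.card) {P : Finset (Finset α)}
    (hP : IsTrcPartition U {e | e ⊆ U ∧ e.card = r} P) : P.card ≤ r + 1 := by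
  obtain rfl | ⟨p, hp⟩ := P.eq_empty_or_nonempty
  · simp
  obtain ⟨v, rfl, hv⟩ | ⟨-, q, hq, hqp, -, hpq⟩ := hP.2.2.2 p hp
  · exact absurd hv (not_isTransversal_complete_singleton hr v)
  · have := hP.card_le_card_sdiff_union_add_two hp hq hqp.symm
    have := isTransversal_complete_iff.1 hpq
    omega

theorem exists_isTrcPartition_complete_card_eq (hr₀ : 0 < r) (hr : r < U.card) :
    ∃ P, IsTrcPartition U {e | e ⊆ U ∧ e.card = r} P ∧ P.card = r + 1 := by
  obtain ⟨S, hSU, hS⟩ := exists_subset_card_eq hr.le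
  have hB : (U \ S).Nonempty := by
    rw [← card_pos, card_sdiff_of_subset hSU]
    omega
  let Q : Finpartition U :=
    (⊥ : Finpartition S).extend hB.ne_empty disjoint_sdiff (union_sdiff_of_subset hSU)
  have hB_not : ¬ IsTransversal {e | e ⊆ U ∧ e.card = r} (U \ S) := by
    rw [isTransversal_complete_iff, Finset.sdiff_sdiff_eq_self hSU, hS]
    exact lt_irrefl r
  have hB_union : ∀ v ∈ S, IsTransversal {e | e ⊆ U ∧ e.card = r} (U \ S ∪ {v}) := by
    intro v hv
    rw [isTransversal_complete_iff, ← sup_eq_union, ← sdiff_sdiff_left,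
      Finset.sdiff_sdiff_eq_self hSU, card_sdiff_of_subset (singleton_subset_iff.2 hv), hS,
      card_singleton]
    omega
  have hB_ne : ∀ v ∈ S, {v} ≠ U \ S := fun v hv h =>
    (mem_sdiff.1 (h ▸ mem_singleton_self v)).2 hv
  have hS_parts : ∀ v ∈ S, {v} ∈ Q.parts := fun v hv =>
    mem_insert_of_mem (mem_map_of_mem _ hv)
  refine ⟨Q.parts, Q.isTrcPartition ?_, by
    rw [Finpartition.card_extend, Finpartition.card_bot, hS]⟩
  intro p hp
  right
  rcases mem_insert.1 hp with rfl | hp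
  · obtain ⟨v, hv⟩ := card_pos.1 (hS ▸ hr₀)
    exact ⟨hB_not, {v}, hS_parts v hv, hB_ne v hv, not_isTransversal_complete_singleton hr v,
      hB_union v hv⟩
  · obtain ⟨v, hv, rfl⟩ := mem_map.1 hp
    refine ⟨not_isTransversal_complete_singleton hr v, U \ S, mem_insert_self _ _,
      (hB_ne v hv).symm, hB_not, ?_⟩
    rw [union_comm]
    exact hB_union v hv

end CompleteHypergraph

theorem stmt5 {α : Type*} [DecidableEq α] (U : Finset α) (n r : ℕ)
    (hU : U.card = n) (hr : 3 ≤ r) (hn : r + 1 < n) :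
    TrcNumberIs U {e : Finset α | e ⊆ U ∧ e.card = r} (r + 1) := by
  have hrU : r < U.card := by omega
  obtain ⟨P, hP, hcard⟩ := exists_isTrcPartition_complete_card_eq (by omega) hrU
  refine ⟨⟨P, hP, hcard⟩, ?_⟩
  rintro _ ⟨P', hP', rfl⟩
  exact hP'.card_le_of_complete hrU
end

section
/- For the r-uniform star hypergraph K_{1,n}^r with n ≥ r, the transversal coalition number is C_τ(K_{1,n}^r) = r + 1. -/
open Finset

/-!
A set `T` is a transversal of the star iff it contains the centre `u` or misses fewer than
`r - 1` leaves. So a part `p ⊆ L` is never a singleton transversal (as `n ≥ r`) and has a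
partner `q ⊆ L` with `|L \ (p ∪ q)| ≤ r - 2`. The other parts avoiding `u` are disjoint
nonempty subsets of `L \ (p ∪ q)`, and at most one part contains `u`: at most
`2 + (r - 2) + 1` parts. Conversely, for `W ⊆ L` with `|W| = r - 1`, the parts `{u}`, `L \ W`
and `{w}` (`w ∈ W`) form a transversal coalition partition with `r + 1` parts.
-/

section Partition

variable {α : Type*} [DecidableEq α]

lemma card_filter_mem_le_one {P : Finset (Finset α)}
    (hdisj : (P : Set (Finset α)).PairwiseDisjoint id) (a : α) :
    (P.filter (a ∈ ·)).card ≤ 1 := by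
  refine card_le_one.2 fun s hs t ht => by_contra fun hst => ?_
  rw [mem_filter] at hs ht
  exact disjoint_left.1 (hdisj hs.1 ht.1 hst) hs.2 ht.2

lemma card_filter_subset_le_card {P : Finset (Finset α)} (hne : ∀ p ∈ P, p.Nonempty)
    (hdisj : (P : Set (Finset α)).PairwiseDisjoint id) (X : Finset α) :
    (P.filter (· ⊆ X)).card ≤ X.card :=
  calc (P.filter (· ⊆ X)).card
      ≤ ((P.filter (· ⊆ X)).biUnion id).card :=
        card_le_card_biUnion (hdisj.subset (coe_subset.2 (filter_subset _ P)))
          fun p hp => hne p (mem_filter.1 hp).1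
    _ ≤ X.card := card_le_card (biUnion_subset.2 fun _ hp => (mem_filter.1 hp).2)

lemma card_le_of_forall_mem_or_subset {P B : Finset (Finset α)} {a : α} {X : Finset α}
    (hne : ∀ p ∈ P, p.Nonempty) (hdisj : (P : Set (Finset α)).PairwiseDisjoint id)
    (h : ∀ p ∈ P, p ∈ B ∨ a ∈ p ∨ p ⊆ X) :
    P.card ≤ B.card + 1 + X.card := by
  have hsub : P ⊆ B ∪ P.filter (a ∈ ·) ∪ P.filter (· ⊆ X) := fun p hp => by
    rcases h p hp with hB | ha | hX <;> simp [*]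
  calc P.card ≤ (B ∪ P.filter (a ∈ ·) ∪ P.filter (· ⊆ X)).card := card_le_card hsub
    _ ≤ B.card + (P.filter (a ∈ ·)).card + (P.filter (· ⊆ X)).card :=
      (card_union_le _ _).trans (Nat.add_le_add_right (card_union_le _ _) _)
    _ ≤ B.card + 1 + X.card := by
      gcongr
      · exact card_filter_mem_le_one hdisj a
      · exact card_filter_subset_le_card hne hdisj X

namespace IsTrcPartition

variable {U : Finset α} {E : Set (Finset α)} {P : Finset (Finset α)}

lemma pairwiseDisjoint (hP : IsTrcPartition U E P) :
    (P : Set (Finset α)).PairwiseDisjoint id :=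
  fun p hp q hq hpq => hP.2.1 p hp q hq hpq

lemma subset_of_mem (hP : IsTrcPartition U E P) {p : Finset α} (hp : p ∈ P) : p ⊆ U :=
  hP.2.2.1 ▸ subset_biUnion_of_mem id hp

end IsTrcPartition

end Partition

section Star

variable {α : Type*} [DecidableEq α]

def starEdges (u : α) (L : Finset α) (r : ℕ) : Set (Finset α) :=
  {e | ∃ S ⊆ L, S.card = r - 1 ∧ e = insert u S}

variable {u v : α} {L T W : Finset α} {r : ℕ}

theorem isTransversal_starEdges_iff :
    IsTransversal (starEdges u L r) T ↔ u ∈ T ∨ (L \ T).card < r - 1 := by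
  constructor
  · intro hT
    by_contra! h
    obtain ⟨S, hS, hcard⟩ := exists_subset_card_eq h.2
    obtain ⟨x, hx⟩ := hT (insert u S) ⟨S, hS.trans sdiff_subset, hcard, rfl⟩
    rw [mem_inter, mem_insert] at hx
    obtain ⟨hxT, rfl | hxS⟩ := hx
    · exact h.1 hxT
    · exact (mem_sdiff.1 (hS hxS)).2 hxT
  · rintro (huT | hcard) e ⟨S, hSL, hS, rfl⟩
    · exact ⟨u, mem_inter.2 ⟨huT, mem_insert_self u S⟩⟩
    · obtain ⟨x, hxS, hxT⟩ :=
        not_subset.1 fun h : S ⊆ L \ T => (card_le_card h).not_gt (hS ▸ hcard)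
      exact ⟨x, mem_inter.2 ⟨by_contra fun h => hxT (mem_sdiff.2 ⟨hSL hxS, h⟩),
        mem_insert_of_mem hxS⟩⟩

lemma not_isTransversal_starEdges_singleton (hv : v ≠ u) (hr : r ≤ L.card) :
    ¬ IsTransversal (starEdges u L r) {v} := by
  have := le_card_sdiff {v} L
  rw [card_singleton] at this
  rw [isTransversal_starEdges_iff, mem_singleton]
  exact fun h => h.elim (fun h => hv h.symm) (by omega)

lemma not_isTransversal_starEdges_sdiff (hu : u ∉ L) (hW : W ⊆ L) (hWr : W.card = r - 1) :
    ¬ IsTransversal (starEdges u L r) (L \ W) := by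
  rw [isTransversal_starEdges_iff, Finset.sdiff_sdiff_eq_self hW]
  exact fun h => h.elim (fun h => hu (mem_sdiff.1 h).1) hWr.symm.not_gt

lemma isTransversal_starEdges_sdiff_union_singleton {w : α} (hw : w ∈ W) (hWr : W.card = r - 1) :
    IsTransversal (starEdges u L r) (L \ W ∪ {w}) := by
  have hsub : L \ (L \ W ∪ {w}) ⊆ W.erase w := fun x hx => by
    simp only [mem_sdiff, mem_union, mem_singleton, not_or] at hx
    exact mem_erase.2 ⟨hx.2.2, by tauto⟩
  have := card_le_card hsub
  rw [card_erase_of_mem hw] at this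
  rw [isTransversal_starEdges_iff]
  have := card_pos.2 ⟨w, hw⟩
  omega

theorem card_le_of_isTrcPartition_starEdges {P : Finset (Finset α)} (hr : r ≤ L.card)
    (hP : IsTrcPartition (insert u L) (starEdges u L r) P) :
    P.card ≤ r + 1 := by
  have hne := hP.1
  have hdisj := hP.pairwiseDisjoint
  have hsubL : ∀ t ∈ P, u ∉ t → t ⊆ L := fun t ht hut x hx =>
    (mem_insert.1 (hP.subset_of_mem ht hx)).resolve_left fun h => hut (h ▸ hx)
  by_cases hall : ∀ p ∈ P, u ∈ p
  · have := card_le_of_forall_mem_or_subset (B := ∅) (X := ∅) hne hdisj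
      fun p hp => Or.inr (Or.inl (hall p hp))
    simp only [card_empty] at this
    omega
  obtain ⟨p, hpP, hup⟩ := not_forall₂.1 hall
  obtain ⟨v, rfl, hv⟩ | ⟨-, q, hqP, -, hq, hpq⟩ := hP.2.2.2 p hpP
  · have hvu : v ≠ u := fun h => hup (mem_singleton.2 h.symm)
    exact absurd hv (not_isTransversal_starEdges_singleton hvu hr)
  have huq : u ∉ q := fun h => hq (isTransversal_starEdges_iff.2 (Or.inl h))
  have hrest : (L \ (p ∪ q)).card < r - 1 :=
    (isTransversal_starEdges_iff.1 hpq).resolve_left (by simp [hup, huq])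
  have hcover :
      ∀ t ∈ P, t ∈ ({p, q} : Finset (Finset α)) ∨ u ∈ t ∨ t ⊆ L \ (p ∪ q) := by
    intro t ht
    by_cases htp : t = p
    · simp [htp]
    by_cases htq : t = q
    · simp [htq]
    refine or_iff_not_imp_left.2 fun _ => or_iff_not_imp_left.2 fun hut => ?_
    rw [subset_sdiff, disjoint_union_right]
    exact ⟨hsubL t ht hut, hdisj ht hpP htp, hdisj ht hqP htq⟩
  have := card_le_of_forall_mem_or_subset hne hdisj hcover
  have := card_le_two (a := p) (b := q)
  omega

theorem exists_isTrcPartition_starEdges_card (hu : u ∉ L) (hr : 2 ≤ r) (hn : r ≤ L.card) :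
    ∃ P, IsTrcPartition (insert u L) (starEdges u L r) P ∧ P.card = r + 1 := by
  obtain ⟨W, hWL, hWr⟩ := exists_subset_card_eq (show r - 1 ≤ L.card by omega)
  obtain ⟨w₀, hw₀⟩ : W.Nonempty := card_pos.1 (by omega)
  have hA : L \ W ≠ ⊥ := by
    rw [bot_eq_empty, ← nonempty_iff_ne_empty, ← card_pos, card_sdiff_of_subset hWL]
    omega
  let QL : Finpartition L := (⊥ : Finpartition W).extend hA disjoint_sdiff
    (sup_sdiff_cancel_right hWL)
  let Q : Finpartition (insert u L) := QL.extend (b := {u}) (singleton_ne_empty u)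
    (disjoint_singleton_right.2 hu) (by rw [sup_eq_union, union_comm]; rfl)
  have hW_ne_u : ∀ w ∈ W, w ≠ u := fun w hw h => hu (h ▸ hWL hw)
  have hW_singleton_ne : ∀ w ∈ W, {w} ≠ L \ W := fun w hw h =>
    (mem_sdiff.1 (h ▸ mem_singleton_self w)).2 hw
  refine ⟨Q.parts, ⟨fun p => Q.nonempty_of_mem_parts, fun _ hp _ hq => Q.disjoint hp hq,
    Q.biUnion_parts, fun p hp => ?_⟩, ?_⟩
  · simp only [Q, QL, Finpartition.extend_parts, Finpartition.parts_bot, mem_insert, mem_map,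
      Function.Embedding.coeFn_mk] at hp
    rcases hp with rfl | rfl | ⟨w, hw, rfl⟩
    · exact Or.inl ⟨u, rfl, isTransversal_starEdges_iff.2 (Or.inl (mem_singleton_self u))⟩
    · refine Or.inr ⟨not_isTransversal_starEdges_sdiff hu hWL hWr, {w₀}, ?_,
        hW_singleton_ne w₀ hw₀, not_isTransversal_starEdges_singleton (hW_ne_u w₀ hw₀) hn,
        isTransversal_starEdges_sdiff_union_singleton hw₀ hWr⟩
      simp [Q, QL, hw₀]
    · refine Or.inr ⟨not_isTransversal_starEdges_singleton (hW_ne_u w hw) hn, L \ W, ?_,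
        (hW_singleton_ne w hw).symm, not_isTransversal_starEdges_sdiff hu hWL hWr, ?_⟩
      · simp [Q, QL]
      · rw [union_comm]
        exact isTransversal_starEdges_sdiff_union_singleton hw hWr
  · simp only [Q, QL, Finpartition.card_extend, Finpartition.card_bot, hWr]
    omega

end Star

theorem stmt8 {α : Type*} [DecidableEq α] (u : α) (L : Finset α) (n r : ℕ)
    (hu : u ∉ L) (hL : L.card = n) (hr : 2 ≤ r) (hn : r ≤ n) :
    TrcNumberIs (insert u L)
      {e : Finset α | ∃ S ⊆ L, S.card = r - 1 ∧ e = insert u S} (r + 1) := by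
  have hrL : r ≤ L.card := hL ▸ hn
  refine ⟨exists_isTrcPartition_starEdges_card hu hr hrL, ?_⟩
  rintro m ⟨P, hP, rfl⟩
  exact card_le_of_isTrcPartition_starEdges hrL hP
end

section
/- For the complete bipartite r-uniform hypergraph K_{m,n}^r with r ≥ 3, m, n > 1, and m + n = r, the transversal coalition number is C_τ(K_{m,n}^r) = r. -/
open Finset

/-!
When `m + n = r` the hypergraph `K_{m,n}^r` has a single edge, the whole vertex set, so every
vertex is a singleton transversal and the partition into singletons is a transversal coalition
partition with `r` parts. No partition into nonempty parts has more parts than there are vertices.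
-/

section

variable {α : Type*} [DecidableEq α] {U : Finset α} {E : Set (Finset α)}

theorem IsTrcPartition.card_le {P : Finset (Finset α)} (hP : IsTrcPartition U E P) :
    P.card ≤ U.card := by
  obtain ⟨hne, hdis, hunion, -⟩ := hP
  rw [← hunion]
  exact card_le_card_biUnion hdis hne

theorem isTrcPartition_image_singleton (hU : ∀ v ∈ U, IsTransversal E {v}) :
    IsTrcPartition U E (U.image singleton) := by
  refine ⟨?_, ?_, ?_, ?_⟩
  · simp
  · simp only [mem_image]
    rintro _ ⟨v, -, rfl⟩ _ ⟨w, -, rfl⟩ hvw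
    exact disjoint_singleton.mpr fun h => hvw (congrArg _ h)
  · ext x
    simp
  · simp only [mem_image]
    rintro _ ⟨v, hv, rfl⟩
    exact Or.inl ⟨v, rfl, hU v hv⟩

theorem trcNumberIs_card_of_forall_isTransversal_singleton
    (hU : ∀ v ∈ U, IsTransversal E {v}) : TrcNumberIs U E U.card :=
  ⟨⟨U.image singleton, isTrcPartition_image_singleton hU,
      card_image_of_injective U singleton_injective⟩,
    by rintro _ ⟨P, hP, rfl⟩; exact hP.card_le⟩

theorem isTransversal_singleton_of_forall_eq {v : α} (hv : v ∈ U) (hE : ∀ e ∈ E, e = U) :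
    IsTransversal E {v} := by
  intro e he
  rw [hE e he]
  exact ⟨v, by simpa using hv⟩

end

theorem stmt10_general {α : Type*} [DecidableEq α] (U1 U2 : Finset α) (m n r : ℕ)
    (hd : Disjoint U1 U2) (h1 : U1.card = m) (h2 : U2.card = n)
    (hmn : m + n = r) :
    TrcNumberIs (U1 ∪ U2)
      {e : Finset α | e ⊆ U1 ∪ U2 ∧ e.card = r ∧ (e ∩ U1).Nonempty ∧ (e ∩ U2).Nonempty}
      r := by
  have hU : (U1 ∪ U2).card = r := by rw [card_union_of_disjoint hd, h1, h2, hmn]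
  have hedge : ∀ e ∈ {e : Finset α | e ⊆ U1 ∪ U2 ∧ e.card = r ∧ (e ∩ U1).Nonempty ∧
      (e ∩ U2).Nonempty}, e = U1 ∪ U2 := by
    rintro e ⟨he, hcard, -, -⟩
    exact eq_of_subset_of_card_le he (by rw [hU, hcard])
  simpa only [hU] using trcNumberIs_card_of_forall_isTransversal_singleton fun v hv =>
    isTransversal_singleton_of_forall_eq hv hedge

theorem stmt10 {α : Type*} [DecidableEq α] (U1 U2 : Finset α) (m n r : ℕ)
    (hd : Disjoint U1 U2) (h1 : U1.card = m) (h2 : U2.card = n)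
    (hr : 3 ≤ r) (hm : 1 < m) (hn : 1 < n) (hmn : m + n = r) :
    TrcNumberIs (U1 ∪ U2)
      {e : Finset α | e ⊆ U1 ∪ U2 ∧ e.card = r ∧ (e ∩ U1).Nonempty ∧ (e ∩ U2).Nonempty}
      r :=
  stmt10_general U1 U2 m n r hd h1 h2 hmn
end

section
/- For the complete r-partite r-uniform hypergraph K^r_{n_1,...,n_r}, the transversal coalition number satisfies r ≤ C_τ(K^r_{n_1,...,n_r}) ≤ 2r. -/
open Finset

/-!
A set is a transversal of `K^r_{n_1,…,n_r}` exactly when it contains a whole part `U_i`.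

Lower bound: pick `x_i ∈ U_i` and split every part into `{x_i}` and `U_i \ {x_i}`. Each pair is
a coalition (two proper subsets of `U_i` with union `U_i`), or `{x_i} = U_i` is a singleton
transversal; either way there are at least `r` parts.

Upper bound: every member `p` of a transversal coalition partition meets some `U_i` with
`U_i ⊆ p ∪ q` for a member `q`. Since the members are disjoint, at most two of them (`p` and `q`)
meet `U_i`, so each index `i` is charged at most twice.
-/

open Function

section Multipartite

variable {α ι : Type*} [DecidableEq α] [Fintype ι]

def multipartiteEdges (parts : ι → Finset α) : Set (Finset α) :=
  {e | ∃ f : ι → α, (∀ i, f i ∈ parts i) ∧ e = univ.image f}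

variable {parts : ι → Finset α}

theorem isTransversal_multipartiteEdges_iff {T : Finset α} :
    IsTransversal (multipartiteEdges parts) T ↔ ∃ i, parts i ⊆ T := by
  constructor
  · intro h
    by_contra! hc
    choose f hf hfT using fun i => not_subset.mp (hc i)
    obtain ⟨y, hy⟩ := h _ ⟨f, hf, rfl⟩
    obtain ⟨hyT, i, -, rfl⟩ : y ∈ T ∧ ∃ i ∈ univ, f i = y := by
      simpa only [mem_inter, mem_image] using hy
    exact hfT i hyT
  · rintro ⟨i, hi⟩ e ⟨f, hf, rfl⟩
    exact ⟨f i, mem_inter.mpr ⟨hi (hf i), mem_image_of_mem f (mem_univ i)⟩⟩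

theorem not_isTransversal_multipartiteEdges_of_ssubset (hdisj : Pairwise (Disjoint on parts))
    (hne : ∀ i, (parts i).Nonempty) {T : Finset α} {i : ι} (hT : T ⊂ parts i) :
    ¬IsTransversal (multipartiteEdges parts) T := by
  intro htr
  obtain ⟨j, hj⟩ := isTransversal_multipartiteEdges_iff.mp htr
  obtain rfl : j = i := by
    by_contra hji
    obtain ⟨y, hy⟩ := hne j
    exact disjoint_left.mp (hdisj hji) hy (hT.subset (hj hy))
  exact hT.2 hj

theorem isCoalition_multipartiteEdges_of_ssubset (hdisj : Pairwise (Disjoint on parts))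
    (hne : ∀ i, (parts i).Nonempty) {p q : Finset α} {i : ι} (hp : p ⊂ parts i)
    (hq : q ⊂ parts i) (hpq : parts i ⊆ p ∪ q) :
    ¬IsTransversal (multipartiteEdges parts) p ∧ q ≠ p ∧
      ¬IsTransversal (multipartiteEdges parts) q ∧
      IsTransversal (multipartiteEdges parts) (p ∪ q) := by
  refine ⟨not_isTransversal_multipartiteEdges_of_ssubset hdisj hne hp, ?_,
    not_isTransversal_multipartiteEdges_of_ssubset hdisj hne hq,
    isTransversal_multipartiteEdges_iff.mpr ⟨i, hpq⟩⟩
  rintro rfl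
  exact hq.2 (by simpa using hpq)

end Multipartite

section UpperBound

variable {α ι : Type*} [DecidableEq α]

theorem card_filter_inter_nonempty_le_two {P : Finset (Finset α)}
    (hP : ∀ p ∈ P, ∀ q ∈ P, p ≠ q → Disjoint p q) {s a b : Finset α} (ha : a ∈ P) (hb : b ∈ P)
    (hs : s ⊆ a ∪ b) : #{d ∈ P | (d ∩ s).Nonempty} ≤ 2 := by
  refine (card_le_card (t := {a, b}) fun d hd => ?_).trans card_le_two
  obtain ⟨hdP, y, hy⟩ := mem_filter.mp hd
  rw [mem_inter] at hy
  have meets_eq : ∀ c ∈ P, y ∈ c → d = c := fun c hc hyc => by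
    by_contra hdc
    exact disjoint_left.mp (hP d hdP c hc hdc) hy.1 hyc
  rcases mem_union.mp (hs hy.2) with hya | hyb
  · exact mem_insert.mpr (Or.inl (meets_eq a ha hya))
  · exact mem_insert_of_mem (mem_singleton.mpr (meets_eq b hb hyb))

theorem card_le_two_mul_of_forall_exists_covered [Fintype ι] {P : Finset (Finset α)}
    (hP : ∀ p ∈ P, ∀ q ∈ P, p ≠ q → Disjoint p q) (s : ι → Finset α)
    (h : ∀ p ∈ P, ∃ i, (p ∩ s i).Nonempty ∧ ∃ q ∈ P, s i ⊆ p ∪ q) :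
    #P ≤ 2 * Fintype.card ι := by
  set charged : ι → Finset (Finset α) :=
    fun i => {p ∈ P | (p ∩ s i).Nonempty ∧ ∃ q ∈ P, s i ⊆ p ∪ q}
  have hcover : P ⊆ univ.biUnion charged := fun p hp => by
    obtain ⟨i, hi⟩ := h p hp
    exact mem_biUnion.mpr ⟨i, mem_univ i, mem_filter.mpr ⟨hp, hi⟩⟩
  have hcharged : ∀ i, #(charged i) ≤ 2 := fun i => by
    rcases (charged i).eq_empty_or_nonempty with hempty | ⟨a, ha⟩
    · simp [hempty]
    obtain ⟨haP, -, b, hbP, hab⟩ := mem_filter.mp ha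
    exact (card_le_card (monotone_filter_right P fun _ _ hp => hp.1)).trans
      (card_filter_inter_nonempty_le_two hP haP hbP hab)
  calc #P ≤ #(univ.biUnion charged) := card_le_card hcover
    _ ≤ ∑ i, #(charged i) := card_biUnion_le
    _ ≤ ∑ _i : ι, 2 := sum_le_sum fun i _ => hcharged i
    _ = 2 * Fintype.card ι := by simp [mul_comm]

variable [Fintype ι] {parts : ι → Finset α} {U : Finset α} {P : Finset (Finset α)}

theorem IsTrcPartition.exists_inter_nonempty_subset_union (hne : ∀ i, (parts i).Nonempty)
    (hP : IsTrcPartition U (multipartiteEdges parts) P) :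
    ∀ p ∈ P, ∃ i, (p ∩ parts i).Nonempty ∧ ∃ q ∈ P, parts i ⊆ p ∪ q := by
  intro p hp
  rcases hP.2.2.2 p hp with ⟨v, rfl, htr⟩ | ⟨-, q, hq, -, hqntr, htr⟩
  · obtain ⟨i, hi⟩ := isTransversal_multipartiteEdges_iff.mp htr
    exact ⟨i, by simpa [inter_eq_right.mpr hi] using hne i, {v}, hp, by simpa using hi⟩
  · obtain ⟨i, hi⟩ := isTransversal_multipartiteEdges_iff.mp htr
    have hnq : ¬parts i ⊆ q := fun h => hqntr (isTransversal_multipartiteEdges_iff.mpr ⟨i, h⟩)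
    obtain ⟨y, hy, hyq⟩ := not_subset.mp hnq
    have hyp : y ∈ p := (mem_union.mp (hi hy)).resolve_right hyq
    exact ⟨i, ⟨y, mem_inter.mpr ⟨hyp, hy⟩⟩, q, hq, hi⟩

theorem IsTrcPartition.card_le_two_mul (hne : ∀ i, (parts i).Nonempty)
    (hP : IsTrcPartition U (multipartiteEdges parts) P) : #P ≤ 2 * Fintype.card ι :=
  card_le_two_mul_of_forall_exists_covered hP.2.1 parts
    (hP.exists_inter_nonempty_subset_union hne)

end UpperBound

section LowerBound

variable {α ι : Type*} [DecidableEq α] {parts : ι → Finset α} {x : ι → α}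

theorem subset_of_eq_singleton_or_eq_sdiff (hx : ∀ i, x i ∈ parts i) {p : Finset α} {i : ι}
    (hp : p = {x i} ∨ p = parts i \ {x i}) : p ⊆ parts i := by
  rcases hp with rfl | rfl
  · exact singleton_subset_iff.mpr (hx i)
  · exact sdiff_subset

variable [Fintype ι]

/-- Erasing `∅` drops the empty remainder `parts i \ {x i}` when `parts i = {x i}`. -/
def splitOffPoints (parts : ι → Finset α) (x : ι → α) : Finset (Finset α) :=
  (univ.biUnion fun i => {{x i}, parts i \ {x i}}).erase ∅

theorem mem_splitOffPoints {p : Finset α} :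
    p ∈ splitOffPoints parts x ↔ p.Nonempty ∧ ∃ i, p = {x i} ∨ p = parts i \ {x i} := by
  simp [splitOffPoints, nonempty_iff_ne_empty]

theorem singleton_mem_splitOffPoints (i : ι) : {x i} ∈ splitOffPoints parts x :=
  mem_splitOffPoints.mpr ⟨singleton_nonempty _, i, Or.inl rfl⟩

theorem disjoint_of_mem_splitOffPoints (hdisj : Pairwise (Disjoint on parts))
    (hx : ∀ i, x i ∈ parts i) {p q : Finset α} (hp : p ∈ splitOffPoints parts x)
    (hq : q ∈ splitOffPoints parts x) (hpq : p ≠ q) : Disjoint p q := by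
  obtain ⟨-, i, hpi⟩ := mem_splitOffPoints.mp hp
  obtain ⟨-, j, hqj⟩ := mem_splitOffPoints.mp hq
  by_cases hij : i = j
  · subst hij
    rcases hpi with rfl | rfl <;> rcases hqj with rfl | rfl
    exacts [absurd rfl hpq, disjoint_sdiff, disjoint_sdiff.symm, absurd rfl hpq]
  · exact (hdisj hij).mono (subset_of_eq_singleton_or_eq_sdiff hx hpi)
      (subset_of_eq_singleton_or_eq_sdiff hx hqj)

theorem biUnion_splitOffPoints (hx : ∀ i, x i ∈ parts i) :
    (splitOffPoints parts x).biUnion id = univ.biUnion parts := by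
  ext y
  simp only [mem_biUnion, id, mem_univ, true_and]
  constructor
  · rintro ⟨p, hp, hyp⟩
    obtain ⟨-, i, hpi⟩ := mem_splitOffPoints.mp hp
    exact ⟨i, subset_of_eq_singleton_or_eq_sdiff hx hpi hyp⟩
  · rintro ⟨i, hyi⟩
    by_cases hyx : y = x i
    · exact ⟨{x i}, singleton_mem_splitOffPoints i, by simp [hyx]⟩
    · have hyrest : y ∈ parts i \ {x i} := mem_sdiff.mpr ⟨hyi, by simpa using hyx⟩
      exact ⟨_, mem_splitOffPoints.mpr ⟨⟨y, hyrest⟩, i, Or.inr rfl⟩, hyrest⟩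

theorem isTrcPartition_splitOffPoints (hdisj : Pairwise (Disjoint on parts))
    (hx : ∀ i, x i ∈ parts i) :
    IsTrcPartition (univ.biUnion parts) (multipartiteEdges parts) (splitOffPoints parts x) := by
  have hne : ∀ i, (parts i).Nonempty := fun i => ⟨x i, hx i⟩
  refine ⟨fun p hp => (mem_splitOffPoints.mp hp).1,
    fun p hp q hq => disjoint_of_mem_splitOffPoints hdisj hx hp hq, biUnion_splitOffPoints hx,
    fun p hp => ?_⟩
  obtain ⟨hpne, i, hpi⟩ := mem_splitOffPoints.mp hp
  have hsingle : {x i} ⊆ parts i := singleton_subset_iff.mpr (hx i)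
  by_cases hrest : (parts i \ {x i}).Nonempty
  · have hsingle_ss : {x i} ⊂ parts i := Finset.ssubset_iff_subset_ne.mpr
      ⟨hsingle, fun h => by simp [← h] at hrest⟩
    have hrest_ss : parts i \ {x i} ⊂ parts i := sdiff_ssubset hsingle (singleton_nonempty _)
    have hrest_mem : parts i \ {x i} ∈ splitOffPoints parts x :=
      mem_splitOffPoints.mpr ⟨hrest, i, Or.inr rfl⟩
    have hunion : parts i ⊆ {x i} ∪ (parts i \ {x i}) := by rw [union_sdiff_of_subset hsingle]
    right
    rcases hpi with rfl | rfl
    · obtain ⟨hntr, hcoal⟩ := isCoalition_multipartiteEdges_of_ssubset hdisj hne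
        hsingle_ss hrest_ss hunion
      exact ⟨hntr, _, hrest_mem, hcoal⟩
    · obtain ⟨hntr, hcoal⟩ := isCoalition_multipartiteEdges_of_ssubset hdisj hne
        hrest_ss hsingle_ss (union_comm _ (parts i \ _) ▸ hunion)
      exact ⟨hntr, _, singleton_mem_splitOffPoints i, hcoal⟩
  · have hpart : parts i ⊆ {x i} :=
      sdiff_eq_empty_iff_subset.mp (not_nonempty_iff_eq_empty.mp hrest)
    rcases hpi with rfl | rfl
    · exact Or.inl ⟨x i, rfl, isTransversal_multipartiteEdges_iff.mpr ⟨i, hpart⟩⟩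
    · exact absurd hpne hrest

theorem card_le_card_splitOffPoints (hdisj : Pairwise (Disjoint on parts))
    (hx : ∀ i, x i ∈ parts i) : Fintype.card ι ≤ #(splitOffPoints parts x) := by
  have hinj : Function.Injective fun i => ({x i} : Finset α) := fun i j hij => by
    by_contra hne
    exact disjoint_left.mp (hdisj hne) (hx i) (singleton_injective hij ▸ hx j)
  calc Fintype.card ι = #(univ.image fun i => ({x i} : Finset α)) := by
        rw [card_image_of_injective _ hinj, card_univ]
    _ ≤ #(splitOffPoints parts x) := card_le_card fun p hp => by
        obtain ⟨i, -, rfl⟩ := mem_image.mp hp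
        exact singleton_mem_splitOffPoints i

end LowerBound

theorem exists_trcNumberIs_of_bounds {α : Type*} [DecidableEq α] {U : Finset α}
    {E : Set (Finset α)} {a b : ℕ} (hlow : ∃ P, IsTrcPartition U E P ∧ a ≤ #P)
    (hup : ∀ P, IsTrcPartition U E P → #P ≤ b) :
    ∃ k, TrcNumberIs U E k ∧ a ≤ k ∧ k ≤ b := by
  obtain ⟨P, hP, haP⟩ := hlow
  have hbdd : BddAbove {m | ∃ P, IsTrcPartition U E P ∧ #P = m} := ⟨b, by
    rintro m ⟨Q, hQ, rfl⟩
    exact hup Q hQ⟩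
  obtain ⟨k, hk⟩ := hbdd.exists_isGreatest_of_nonempty ⟨#P, P, hP, rfl⟩
  obtain ⟨Q, hQ, rfl⟩ := hk.1
  exact ⟨#Q, hk, haP.trans (hk.2 ⟨P, hP, rfl⟩), hup Q hQ⟩

theorem stmt13 {α : Type*} [DecidableEq α] (r : ℕ) (parts : Fin r → Finset α)
    (hdisj : ∀ i j, i ≠ j → Disjoint (parts i) (parts j))
    (hne : ∀ i, (parts i).Nonempty) :
    ∃ k, TrcNumberIs (Finset.univ.biUnion parts)
        {e : Finset α | ∃ f : Fin r → α, (∀ i, f i ∈ parts i) ∧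
          e = Finset.image f Finset.univ} k ∧
      r ≤ k ∧ k ≤ 2 * r := by
  obtain ⟨x, hx⟩ := Classical.skolem.mp hne
  have h := exists_trcNumberIs_of_bounds (E := multipartiteEdges parts)
    ⟨_, isTrcPartition_splitOffPoints hdisj hx, card_le_card_splitOffPoints hdisj hx⟩
    fun P hP => hP.card_le_two_mul hne
  rw [Fintype.card_fin] at h
  exact h
end
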